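/- The Choi matrix 𝒥_Λ of the covariant Pauli channel satisfies tr(𝒥_Λ²) = 4p0² + 4p3² + 8p1² and det(𝒥_Λ) = 16 p0 p3 p1², and consequently the anti-degradability criterion tr(𝒥_Λ²) − 4√(det 𝒥_Λ) ≤ tr(Λ(I)²) = 2 holds if and only if 2(p0² + p3²) + (1−p0−p3)² − 4(1−p0−p3)√(p0 p3) ≤ 1. -/

import Mathlib

/-! The determinant factors as `(2p₁)² ((p₀ + p₃)² - (p₀ - p₃)²)`, so for `p₁ ≥ 0` we get
`√(det 𝒥) = 4 p₁ √(p₀ p₃)`. Substituting `2p₁ = 1 - p₀ - p₃` then turns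
`tr(𝒥²) - 4√(det 𝒥) - 2` into exactly twice `2(p₀² + p₃²) + (1-p₀-p₃)² - 4(1-p₀-p₃)√(p₀p₃) - 1`. -/

open Matrix

noncomputable section

/-- The Choi matrix of the covariant Pauli channel (it has real entries). -/
def choiMat (p0 p1 p3 : ℝ) : Matrix (Fin 4) (Fin 4) ℝ :=
  !![p0 + p3, 0, 0, p0 - p3;
     0, 2 * p1, 0, 0;
     0, 0, 2 * p1, 0;
     p0 - p3, 0, 0, p0 + p3]

theorem choiMat_mul_self_trace (p0 p1 p3 : ℝ) :
    (choiMat p0 p1 p3 * choiMat p0 p1 p3).trace = 4 * p0 ^ 2 + 4 * p3 ^ 2 + 8 * p1 ^ 2 := by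
  simp [choiMat, trace, Fin.sum_univ_four]
  ring

theorem choiMat_det (p0 p1 p3 : ℝ) : (choiMat p0 p1 p3).det = 16 * p0 * p3 * p1 ^ 2 := by
  rw [det_succ_row_zero, Fin.sum_univ_four]
  simp [choiMat, det_fin_three, Fin.succAbove]
  ring

theorem sqrt_choiMat_det {p1 : ℝ} (p0 p3 : ℝ) (h1 : 0 ≤ p1) :
    √(choiMat p0 p1 p3).det = 4 * p1 * √(p0 * p3) := by
  rw [choiMat_det, show 16 * p0 * p3 * p1 ^ 2 = (4 * p1) ^ 2 * (p0 * p3) by ring,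
    Real.sqrt_mul (by positivity), Real.sqrt_sq (by positivity)]

theorem pauliChannel_antidegradable_criterion_general (p0 p1 p3 : ℝ) (h1 : 0 ≤ p1)
    (hsum : p0 + 2 * p1 + p3 = 1) :
    (choiMat p0 p1 p3 * choiMat p0 p1 p3).trace = 4 * p0 ^ 2 + 4 * p3 ^ 2 + 8 * p1 ^ 2 ∧
    (choiMat p0 p1 p3).det = 16 * p0 * p3 * p1 ^ 2 ∧
    ((choiMat p0 p1 p3 * choiMat p0 p1 p3).trace - 4 * Real.sqrt (choiMat p0 p1 p3).det ≤ 2 ↔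
      2 * (p0 ^ 2 + p3 ^ 2) + (1 - p0 - p3) ^ 2 - 4 * (1 - p0 - p3) * Real.sqrt (p0 * p3) ≤ 1) := by
  refine ⟨choiMat_mul_self_trace p0 p1 p3, choiMat_det p0 p1 p3, ?_⟩
  rw [choiMat_mul_self_trace, sqrt_choiMat_det p0 p3 h1]
  have twice : 4 * p0 ^ 2 + 4 * p3 ^ 2 + 8 * p1 ^ 2 - 4 * (4 * p1 * √(p0 * p3)) - 2
      = 2 * (2 * (p0 ^ 2 + p3 ^ 2) + (1 - p0 - p3) ^ 2 - 4 * (1 - p0 - p3) * √(p0 * p3) - 1) := by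
    linear_combination (2 * (2 * p1 + 1 - p0 - p3) - 8 * √(p0 * p3)) * hsum
  constructor <;> intro h <;> linarith

/-- For the covariant Pauli channel: `tr(𝒥²) = 4p₀² + 4p₃² + 8p₁²`,
`det 𝒥 = 16 p₀ p₃ p₁²`, and the anti-degradability criterion
`tr(𝒥²) - 4√(det 𝒥) ≤ tr(Λ(I)²) = 2` holds iff
`2(p₀² + p₃²) + (1-p₀-p₃)² - 4(1-p₀-p₃)√(p₀p₃) ≤ 1`. -/
theorem pauliChannel_antidegradable_criterion (p0 p1 p3 : ℝ) (h0 : 0 ≤ p0) (h1 : 0 ≤ p1)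
    (h3 : 0 ≤ p3) (hsum : p0 + 2 * p1 + p3 = 1) :
    (choiMat p0 p1 p3 * choiMat p0 p1 p3).trace = 4 * p0 ^ 2 + 4 * p3 ^ 2 + 8 * p1 ^ 2 ∧
    (choiMat p0 p1 p3).det = 16 * p0 * p3 * p1 ^ 2 ∧
    ((choiMat p0 p1 p3 * choiMat p0 p1 p3).trace - 4 * Real.sqrt (choiMat p0 p1 p3).det ≤ 2 ↔
      2 * (p0 ^ 2 + p3 ^ 2) + (1 - p0 - p3) ^ 2 - 4 * (1 - p0 - p3) * Real.sqrt (p0 * p3) ≤ 1) :=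
  pauliChannel_antidegradable_criterion_general p0 p1 p3 h1 hsum

end
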